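/- arXiv:1507.07673 — 2 statements merged into one kernel-verified Lean document; each statement's English description precedes it below -/
import Mathlib

section
/- Let F be a distribution on ℝ and G a distribution on (0,∞), and let α ≥ 0. If F ∈ R*_{-α}, G ∈ R_{-α} (i.e., Ḡ(x) > 0 for all x and lim_{x→∞} Ḡ(xy)/Ḡ(x) = y^{-α} for all y > 0), and Ḡ(x) = O(F̄(x)) as x → ∞, then every convex combination pF+(1-p)G, 0<p<1, belongs to R*_{-α}. -/
open MeasureTheory ProbabilityTheory Filter Asymptotics

noncomputable section

/-- The tail function `Ū(x) = U((x,∞))` of a measure on `ℝ`. -/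
def tailDist (μ : Measure ℝ) (x : ℝ) : ℝ := (μ (Set.Ioi x)).toReal

/-- Convolution of two measures on `ℝ`. -/
def convDist (μ ν : Measure ℝ) : Measure ℝ := (μ.prod ν).map (fun p => p.1 + p.2)

/-- The distribution with CDF `V(x)𝟙_{x ≥ 0}`, i.e. the pushforward under `x ↦ max x 0`. -/
def posMod (μ : Measure ℝ) : Measure ℝ := μ.map (fun x => max x 0)

/-- `V̂(α) = ∫ e^{αx} V(dx)`. -/
def mgfVal (μ : Measure ℝ) (α : ℝ) : ℝ := ∫ x, Real.exp (α * x) ∂μ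

/-- The convolution-equivalence class `S(α)`: a distribution `V` on `ℝ` is in `S(α)` if
the distribution with CDF `V(x)𝟙_{x ≥ 0}` has everywhere positive tail,
`V̄(x-y)/V̄(x) → e^{αy}` for all `y`, `V̂(α) = ∫ e^{αx} V(dx) < ∞`, and
`\overline{V^{2*}}(x)/V̄(x) → 2V̂(α)`. -/
def MemCE (α : ℝ) (V : Measure ℝ) : Prop :=
  (∀ x : ℝ, 0 < tailDist (posMod V) x) ∧
  (∀ y : ℝ, Tendsto (fun x => tailDist (posMod V) (x - y) / tailDist (posMod V) x)
      atTop (nhds (Real.exp (α * y)))) ∧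
  Integrable (fun x => Real.exp (α * x)) (posMod V) ∧
  Tendsto (fun x => tailDist (convDist (posMod V) (posMod V)) x / tailDist (posMod V) x)
      atTop (nhds (2 * mgfVal (posMod V) α))

/-- Strongly regular variation `R*_{-α}`: the distribution `V` with tail
`V̄(x) = Ū(eˣ)/Ū(0)` (i.e. the conditional law of `ln ξ` given `ξ > 0`, where `ξ ∼ U`)
belongs to `S(α)`. -/
def MemSRV (α : ℝ) (U : Measure ℝ) : Prop :=
  U (Set.Ioi 0) ≠ 0 ∧
  MemCE α (((U (Set.Ioi 0))⁻¹ • U.restrict (Set.Ioi 0)).map Real.log)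

/-- Regular variation `R_{-α}`: `Ū(x) > 0` for all `x` and `Ū(xy)/Ū(x) → y^{-α}` for `y > 0`. -/
def MemRV (α : ℝ) (U : Measure ℝ) : Prop :=
  (∀ x : ℝ, 0 < tailDist U x) ∧
  ∀ y : ℝ, 0 < y →
    Tendsto (fun x => tailDist U (x * y) / tailDist U x) atTop (nhds (y ^ (-α)))

/-- Assumption A: every convex combination `pF + (1-p)G`, `0 < p < 1`,
is of strongly regular variation with index `-α`. -/
def AssumpA (α : ℝ) (F G : Measure ℝ) : Prop :=
  ∀ p : ℝ, 0 < p → p < 1 →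
    MemSRV α (ENNReal.ofReal p • F + ENNReal.ofReal (1 - p) • G)

end

/-!
Write `V` for the law of `log ξ` given `ξ > 0` under `F`, and `P` for the same law under the
mixture `H = pF + (1-p)G`, both truncated at `0`. For `u ≥ 0`, `P̄(u)` is a positive combination
of `V̄(u)` and `Ḡ(eᵘ)`; the latter is long-tailed because `G` is regularly varying, and it is
`O(V̄(u))`. So `P` is long-tailed with `P̄ ≍ V̄`, and `S(α)` is closed under such weak tail
equivalence: split `P^{2*}(x, ∞)` according to whether one summand is `≤ T`. That part, divided
by `P̄(x)`, tends to `2∫_{t ≤ T} e^{αt} P(dt)` by dominated convergence; the part where both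
summands exceed `T` is at most a constant times the corresponding part for `V`, which is
`≈ 2∫_{t > T} e^{αt} V(dt) · V̄(x)` because `V ∈ S(α)`, hence negligible as `T → ∞`.
-/

open Set Topology

/-- The class `L(α)`, for a tail function `f`. -/
def IsLongTailed (α : ℝ) (f : ℝ → ℝ) : Prop :=
  ∀ y, Tendsto (fun x => f (x - y) / f x) atTop (𝓝 (Real.exp (α * y)))

/-- The class `S(α)` stated for `μ` itself: `MemCE α V` unfolds to `IsConvEquiv α (posMod V)`. -/
def IsConvEquiv (α : ℝ) (μ : Measure ℝ) : Prop :=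
  (∀ x, 0 < tailDist μ x) ∧ IsLongTailed α (tailDist μ) ∧
  Integrable (fun x => Real.exp (α * x)) μ ∧
  Tendsto (fun x => tailDist (convDist μ μ) x / tailDist μ x) atTop (𝓝 (2 * mgfVal μ α))

theorem tailDist_nonneg (μ : Measure ℝ) (x : ℝ) : 0 ≤ tailDist μ x := ENNReal.toReal_nonneg

section Tail

variable (μ : Measure ℝ) [IsFiniteMeasure μ]

theorem tailDist_antitone : Antitone (tailDist μ) := fun _ _ hab =>
  ENNReal.toReal_mono (measure_ne_top _ _) (measure_mono (Ioi_subset_Ioi hab))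

theorem measurable_tailDist : Measurable (tailDist μ) := (tailDist_antitone μ).measurable

theorem ofReal_tailDist (x : ℝ) : ENNReal.ofReal (tailDist μ x) = μ (Ioi x) :=
  ENNReal.ofReal_toReal (measure_ne_top _ _)

theorem tailDist_pos_of_eventually_pos (h : ∀ᶠ x in atTop, 0 < tailDist μ x) (x : ℝ) :
    0 < tailDist μ x := by
  obtain ⟨a, ha⟩ := h.exists_forall_of_atTop
  exact (ha _ (le_max_right x a)).trans_le (tailDist_antitone μ (le_max_left x a))

variable {μ}

theorem measure_Ioi_le_of_tailDist_le {ν : Measure ℝ} [IsFiniteMeasure ν] {C x : ℝ} (hC : 0 ≤ C)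
    (h : tailDist ν x ≤ C * tailDist μ x) : ν (Ioi x) ≤ ENNReal.ofReal C * μ (Ioi x) := by
  rw [← ofReal_tailDist, ← ofReal_tailDist, ← ENNReal.ofReal_mul hC]
  exact ENNReal.ofReal_le_ofReal h

end Tail

theorem exists_pos_eventually_le_of_isBigO {f g : ℝ → ℝ} (h : f =O[atTop] g)
    (hg : ∀ x, 0 ≤ g x) : ∃ C > 0, ∀ᶠ x in atTop, f x ≤ C * g x := by
  obtain ⟨C, hC, hfg⟩ := isBigO_iff'.1 h
  refine ⟨C, hC, hfg.mono fun x hx => ?_⟩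
  rw [Real.norm_of_nonneg (hg x), Real.norm_eq_abs] at hx
  exact (le_abs_self _).trans hx

theorem min_div_le_add_div_add {a b c d : ℝ} (hb : 0 < b) (hd : 0 < d) :
    min (a / b) (c / d) ≤ (a + c) / (b + d) := by
  have h1 := (le_div_iff₀ hb).1 (min_le_left (a / b) (c / d))
  have h2 := (le_div_iff₀ hd).1 (min_le_right (a / b) (c / d))
  rw [le_div_iff₀ (by positivity), mul_add]
  linarith

theorem add_div_add_le_max_div {a b c d : ℝ} (hb : 0 < b) (hd : 0 < d) :
    (a + c) / (b + d) ≤ max (a / b) (c / d) := by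
  have h1 := (div_le_iff₀ hb).1 (le_max_left (a / b) (c / d))
  have h2 := (div_le_iff₀ hd).1 (le_max_right (a / b) (c / d))
  rw [div_le_iff₀ (by positivity), mul_add]
  linarith

namespace IsLongTailed

variable {α : ℝ} {f g : ℝ → ℝ}

theorem congr (hf : IsLongTailed α f) (h : f =ᶠ[atTop] g) : IsLongTailed α g := by
  intro y
  refine (hf y).congr' ?_
  filter_upwards [h, (tendsto_atTop_add_const_right _ (-y) tendsto_id).eventually h]
    with x hx hxy
  simp only [id, ← sub_eq_add_neg] at hxy
  rw [hx, hxy]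

theorem add (hf : IsLongTailed α f) (hg : IsLongTailed α g) (hf0 : ∀ᶠ x in atTop, 0 < f x)
    (hg0 : ∀ᶠ x in atTop, 0 < g x) {A B : ℝ} (hA : 0 < A) (hB : 0 < B) :
    IsLongTailed α (fun x => A * f x + B * g x) := by
  intro y
  have hmin := (hf y).min (hg y)
  have hmax := (hf y).max (hg y)
  rw [min_self] at hmin
  rw [max_self] at hmax
  refine tendsto_of_tendsto_of_tendsto_of_le_of_le' hmin hmax ?_ ?_ <;>
    filter_upwards [hf0, hg0] with x hfx hgx
  · simpa only [mul_div_mul_left _ _ hA.ne', mul_div_mul_left _ _ hB.ne'] using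
      min_div_le_add_div_add (a := A * f (x - y)) (c := B * g (x - y)) (mul_pos hA hfx)
        (mul_pos hB hgx)
  · simpa only [mul_div_mul_left _ _ hA.ne', mul_div_mul_left _ _ hB.ne'] using
      add_div_add_le_max_div (a := A * f (x - y)) (c := B * g (x - y)) (mul_pos hA hfx)
        (mul_pos hB hgx)

end IsLongTailed

theorem MemRV.isLongTailed_comp_exp {α : ℝ} {G : Measure ℝ} (hG : MemRV α G) :
    IsLongTailed α (fun u => tailDist G (Real.exp u)) := by
  intro y
  have hlim : Real.exp (-y) ^ (-α) = Real.exp (α * y) := by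
    rw [← Real.exp_mul]; ring_nf
  rw [← hlim]
  refine ((hG.2 _ (Real.exp_pos _)).comp Real.tendsto_exp_atTop).congr fun x => ?_
  simp only [Function.comp_apply, ← Real.exp_add, sub_eq_add_neg]

theorem lintegral_ofReal_le_of_measure_lt_le {X : Type*} [MeasurableSpace X] {μ ν : Measure X}
    {f : X → ℝ} (hf : 0 ≤ f) (hfm : Measurable f) {s : ℝ} (hs : 0 ≤ s) {c : ENNReal}
    (hc : c ≠ ⊤) (h : ∀ t, s < t → μ {a | t < f a} ≤ c * ν {a | t < f a}) :
    ∫⁻ a, ENNReal.ofReal (f a) ∂μ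
      ≤ ENNReal.ofReal s * μ univ + c * ∫⁻ a, ENNReal.ofReal (f a) ∂ν := by
  rw [lintegral_eq_lintegral_meas_lt μ (.of_forall hf) hfm.aemeasurable,
    lintegral_eq_lintegral_meas_lt ν (.of_forall hf) hfm.aemeasurable,
    ← Ioc_union_Ioi_eq_Ioi hs, lintegral_union measurableSet_Ioi Ioc_disjoint_Ioi_same]
  gcongr
  · calc ∫⁻ t in Ioc 0 s, μ {a | t < f a}
        ≤ ∫⁻ _ in Ioc 0 s, μ univ := lintegral_mono fun _ => measure_mono (subset_univ _)
      _ = ENNReal.ofReal s * μ univ := by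
          rw [setLIntegral_const, Real.volume_Ioc, sub_zero, mul_comm]
  · calc ∫⁻ t in Ioi s, μ {a | t < f a}
        ≤ ∫⁻ t in Ioi s, c * ν {a | t < f a} := setLIntegral_mono' measurableSet_Ioi h
      _ = c * ∫⁻ t in Ioi s, ν {a | t < f a} := lintegral_const_mul' _ _ hc
      _ ≤ c * ∫⁻ t in Ioc 0 s ∪ Ioi s, ν {a | t < f a} := by gcongr; exact subset_union_right

theorem integrable_exp_of_isBigO_tailDist {α : ℝ} (hα : 0 ≤ α) {μ ν : Measure ℝ}
    [IsFiniteMeasure μ] [IsFiniteMeasure ν] (hμ : Integrable (fun x => Real.exp (α * x)) μ)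
    (h : tailDist ν =O[atTop] tailDist μ) : Integrable (fun x => Real.exp (α * x)) ν := by
  rcases hα.eq_or_lt with rfl | hα
  · simp
  obtain ⟨C, hC, hle⟩ := exists_pos_eventually_le_of_isBigO h (tailDist_nonneg μ)
  obtain ⟨T, hT⟩ := hle.exists_forall_of_atTop
  have hexp : ∀ t > 0, {x | t < Real.exp (α * x)} = Ioi (Real.log t / α) := fun t ht => by
    ext x
    rw [mem_ofPred_eq, mem_Ioi, div_lt_iff₀' hα, Real.log_lt_iff_lt_exp ht]
  have hnn : ∀ x, 0 ≤ Real.exp (α * x) := fun x => (Real.exp_pos _).le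
  have hm : Measurable fun x => Real.exp (α * x) := by fun_prop
  refine ⟨hm.aestronglyMeasurable, (hasFiniteIntegral_iff_ofReal (.of_forall hnn)).2 ?_⟩
  refine (lintegral_ofReal_le_of_measure_lt_le hnn hm (Real.exp_pos (α * T)).le
    (ν := μ) (ENNReal.ofReal_ne_top (r := C)) fun t ht => ?_).trans_lt ?_
  · have ht0 := (Real.exp_pos _).trans ht
    rw [hexp t ht0]
    refine measure_Ioi_le_of_tailDist_le hC.le (hT _ ?_)
    rw [le_div_iff₀ hα, mul_comm, ← Real.log_exp (α * T)]
    exact (Real.log_lt_log (Real.exp_pos _) ht).le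
  · have := (hasFiniteIntegral_iff_ofReal (.of_forall hnn)).1 hμ.2
    exact ENNReal.add_lt_top.2 ⟨ENNReal.mul_lt_top ENNReal.ofReal_lt_top (measure_lt_top _ _),
      ENNReal.mul_lt_top ENNReal.ofReal_lt_top this⟩

def jointTailSet (T x : ℝ) : Set (ℝ × ℝ) := {p | T < p.1 ∧ T < p.2 ∧ x < p.1 + p.2}

theorem measurableSet_jointTailSet (T x : ℝ) : MeasurableSet (jointTailSet T x) :=
  (measurableSet_lt measurable_const measurable_fst).inter
    ((measurableSet_lt measurable_const measurable_snd).inter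
      (measurableSet_lt measurable_const (measurable_fst.add measurable_snd)))

section Convolution

variable (μ ν : Measure ℝ)

theorem prod_apply_sum_gt_inter_fst_le [SFinite ν] (T x : ℝ) :
    (μ.prod ν) ({p | x < p.1 + p.2} ∩ {p | p.1 ≤ T}) = ∫⁻ t in Iic T, ν (Ioi (x - t)) ∂μ := by
  rw [Measure.prod_apply ((measurableSet_lt measurable_const (by fun_prop)).inter
    (measurableSet_le measurable_fst measurable_const)), ← lintegral_indicator measurableSet_Iic]
  congr 1 with t
  by_cases h : t ≤ T
  · simp only [indicator_of_mem (show t ∈ Iic T from h)]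
    congr 1 with s
    simp [h, sub_lt_iff_lt_add']
  · simp [h]

theorem prod_jointTailSet [SFinite ν] (T x : ℝ) :
    (μ.prod ν) (jointTailSet T x) = ∫⁻ t in Ioi T, ν (Ioi (max T (x - t))) ∂μ := by
  rw [Measure.prod_apply (measurableSet_jointTailSet T x), ← lintegral_indicator measurableSet_Ioi]
  congr 1 with t
  by_cases h : T < t
  · simp only [indicator_of_mem (show t ∈ Ioi T from h)]
    congr 1 with s
    simp [jointTailSet, h, sub_lt_iff_lt_add']
  · simp [jointTailSet, h]

/-- For `x > 2T` at most one of two summands with sum `> x` can be `≤ T`. -/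
theorem convDist_self_apply_Ioi [SFinite μ] {T x : ℝ} (hx : 2 * T < x) :
    convDist μ μ (Ioi x)
      = 2 * ∫⁻ t in Iic T, μ (Ioi (x - t)) ∂μ + (μ.prod μ) (jointTailSet T x) := by
  set S : Set (ℝ × ℝ) := {p | x < p.1 + p.2}
  set A : Set (ℝ × ℝ) := {p | p.1 ≤ T}
  set B : Set (ℝ × ℝ) := {p | p.2 ≤ T}
  have hA : MeasurableSet A := measurableSet_le measurable_fst measurable_const
  have hB : MeasurableSet B := measurableSet_le measurable_snd measurable_const
  have hswap : (S \ A) ∩ B = Prod.swap ⁻¹' (S ∩ A) := by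
    ext ⟨a, b⟩
    simp only [S, A, B, mem_inter_iff, Set.mem_sdiff, mem_preimage, Prod.swap_prod_mk,
      mem_ofPred_eq, not_le]
    constructor
    · rintro ⟨⟨h, -⟩, hb⟩; exact ⟨by linarith, hb⟩
    · rintro ⟨h, hb⟩; exact ⟨⟨by linarith, by linarith⟩, hb⟩
  have hjoint : (S \ A) \ B = jointTailSet T x := by
    ext ⟨a, b⟩
    simp only [S, A, B, jointTailSet, Set.mem_sdiff, mem_ofPred_eq, not_le]
    tauto
  rw [convDist, Measure.map_apply (by fun_prop) measurableSet_Ioi]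
  change (μ.prod μ) S = _
  rw [← measure_inter_add_sdiff S hA, ← measure_inter_add_sdiff (S \ A) hB, hswap,
    hjoint, Measure.measurePreserving_swap.measure_preimage
      (((measurableSet_lt measurable_const (by fun_prop)).inter hA).nullMeasurableSet),
    prod_apply_sum_gt_inter_fst_le, two_mul, add_assoc]

theorem tailDist_convDist_self [IsFiniteMeasure μ] {T x : ℝ} (hx : 2 * T < x) :
    tailDist (convDist μ μ) x
      = 2 * ∫ t in Iic T, tailDist μ (x - t) ∂μ + ((μ.prod μ) (jointTailSet T x)).toReal := by
  have hfin : convDist μ μ (Ioi x) ≠ ⊤ := by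
    rw [convDist, Measure.map_apply (by fun_prop) measurableSet_Ioi]
    exact measure_ne_top _ _
  rw [convDist_self_apply_Ioi μ hx] at hfin
  rw [tailDist, convDist_self_apply_Ioi μ hx,
    ENNReal.toReal_add (ENNReal.add_ne_top.1 hfin).1 (measure_ne_top _ _), ENNReal.toReal_mul,
    ← integral_toReal]
  · rfl
  · exact (Monotone.measurable fun _ _ hst => measure_mono (Ioi_subset_Ioi (by linarith)))
      |>.aemeasurable
  · exact .of_forall fun t => measure_lt_top _ _

end Convolution

theorem tendsto_setIntegral_Iic_atTop {μ : Measure ℝ} {f : ℝ → ℝ} (hf : Integrable f μ) :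
    Tendsto (fun T => ∫ t in Iic T, f t ∂μ) atTop (𝓝 (∫ t, f t ∂μ)) := by
  simpa [iUnion_Iic] using
    tendsto_setIntegral_of_monotone (fun _ => measurableSet_Iic) (fun _ _ => Iic_subset_Iic.2)
      hf.integrableOn (μ := μ)

/-- Dominated convergence: on `t ≤ T` the ratios `ν̄(x - t)/ν̄(x)` are bounded by
`ν̄(x - T)/ν̄(x) → e^{αT}`. -/
theorem IsLongTailed.tendsto_setIntegral_Iic_div {α : ℝ} {μ ν : Measure ℝ} [IsFiniteMeasure μ]
    [IsFiniteMeasure ν] (hν : IsLongTailed α (tailDist ν)) (T : ℝ) :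
    Tendsto (fun x => (∫ t in Iic T, tailDist ν (x - t) ∂μ) / tailDist ν x) atTop
      (𝓝 (∫ t in Iic T, Real.exp (α * t) ∂μ)) := by
  simp only [← integral_div]
  have hbound : ∀ᶠ x in atTop, tailDist ν (x - T) / tailDist ν x ≤ Real.exp (α * T) + 1 :=
    (hν T).eventually (eventually_le_nhds (lt_add_one _))
  refine tendsto_integral_filter_of_dominated_convergence (fun _ => Real.exp (α * T) + 1)
    (.of_forall fun x => ((measurable_tailDist ν).comp (measurable_const.sub measurable_id)
      |>.div_const _).aestronglyMeasurable) ?_ (integrable_const _) (.of_forall fun t => hν t)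
  filter_upwards [hbound] with x hx
  refine (ae_restrict_iff' measurableSet_Iic).2 (.of_forall fun t (ht : t ≤ T) => ?_)
  rw [Real.norm_of_nonneg (div_nonneg (tailDist_nonneg _ _) (tailDist_nonneg _ _))]
  exact (div_le_div_of_nonneg_right (tailDist_antitone ν (by linarith))
    (tailDist_nonneg _ _)).trans hx

theorem prod_jointTailSet_comm (μ ν : Measure ℝ) [SFinite μ] [SFinite ν] (T x : ℝ) :
    (μ.prod ν) (jointTailSet T x) = (ν.prod μ) (jointTailSet T x) := by
  rw [← Measure.prod_swap, Measure.map_apply measurable_swap (measurableSet_jointTailSet T x)]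
  congr 1 with ⟨a, b⟩
  simp only [jointTailSet, mem_preimage, Prod.swap_prod_mk, mem_ofPred_eq, add_comm a b]
  tauto

/-- The joint tail only sees `ν` on `(T, ∞)`, where it is dominated by `c • μ`. -/
theorem prod_jointTailSet_le_right {μ ν : Measure ℝ} [SFinite μ] [SFinite ν] (σ : Measure ℝ)
    {c : ENNReal} (hc : c ≠ ⊤) {T : ℝ} (h : ∀ u, T ≤ u → ν (Ioi u) ≤ c * μ (Ioi u)) (x : ℝ) :
    (σ.prod ν) (jointTailSet T x) ≤ c * (σ.prod μ) (jointTailSet T x) := by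
  rw [prod_jointTailSet, prod_jointTailSet, ← lintegral_const_mul' _ _ hc]
  exact lintegral_mono fun t => h _ (le_max_left _ _)

theorem prod_jointTailSet_le {μ ν : Measure ℝ} [SFinite μ] [SFinite ν] {c : ENNReal} (hc : c ≠ ⊤)
    {T : ℝ} (h : ∀ u, T ≤ u → ν (Ioi u) ≤ c * μ (Ioi u)) (x : ℝ) :
    (ν.prod ν) (jointTailSet T x) ≤ c * c * (μ.prod μ) (jointTailSet T x) :=
  calc (ν.prod ν) (jointTailSet T x)
      ≤ c * (ν.prod μ) (jointTailSet T x) := prod_jointTailSet_le_right ν hc h x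
    _ = c * (μ.prod ν) (jointTailSet T x) := by rw [prod_jointTailSet_comm]
    _ ≤ c * (c * (μ.prod μ) (jointTailSet T x)) := by
        gcongr; exact prod_jointTailSet_le_right μ hc h x
    _ = c * c * (μ.prod μ) (jointTailSet T x) := (mul_assoc _ _ _).symm

theorem IsConvEquiv.tendsto_jointTailSet_div {α : ℝ} {μ : Measure ℝ} [IsFiniteMeasure μ]
    (hμ : IsConvEquiv α μ) (T : ℝ) :
    Tendsto (fun x => ((μ.prod μ) (jointTailSet T x)).toReal / tailDist μ x) atTop
      (𝓝 (2 * mgfVal μ α - 2 * ∫ t in Iic T, Real.exp (α * t) ∂μ)) := by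
  refine (hμ.2.2.2.sub ((hμ.2.1.tendsto_setIntegral_Iic_div T).const_mul 2)).congr' ?_
  filter_upwards [eventually_gt_atTop (2 * T)] with x hx
  rw [tailDist_convDist_self μ hx]
  ring

theorem tendsto_of_forall_eventually_bounds {ι α β : Type*} [TopologicalSpace β] [LinearOrder β]
    [OrderTopology β] {l : Filter ι} [l.NeBot] {l' : Filter α} {f : α → β} {b : β}
    {lo hi : ι → α → β} {loLim hiLim : ι → β}
    (hlo : ∀ᶠ i in l, ∀ᶠ x in l', lo i x ≤ f x) (hhi : ∀ᶠ i in l, ∀ᶠ x in l', f x ≤ hi i x)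
    (hloLim : ∀ i, Tendsto (lo i) l' (𝓝 (loLim i))) (hhiLim : ∀ i, Tendsto (hi i) l' (𝓝 (hiLim i)))
    (hlob : Tendsto loLim l (𝓝 b)) (hhib : Tendsto hiLim l (𝓝 b)) :
    Tendsto f l' (𝓝 b) := by
  refine tendsto_order.2 ⟨fun a ha => ?_, fun a ha => ?_⟩
  · obtain ⟨i, hi, hai⟩ := (hlo.and (hlob.eventually (eventually_gt_nhds ha))).exists
    filter_upwards [hi, (hloLim i).eventually (eventually_gt_nhds hai)] with x h1 h2
    exact h2.trans_le h1
  · obtain ⟨i, hi, hai⟩ := (hhi.and (hhib.eventually (eventually_lt_nhds ha))).exists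
    filter_upwards [hi, (hhiLim i).eventually (eventually_lt_nhds hai)] with x h1 h2
    exact h1.trans_lt h2

theorem tailDist_convDist_self_le {μ ν : Measure ℝ} [IsFiniteMeasure μ] [IsFiniteMeasure ν]
    {C T x : ℝ} (hC : 0 ≤ C) (h : ∀ u, T ≤ u → tailDist ν u ≤ C * tailDist μ u) (hx : 2 * T < x) :
    tailDist (convDist ν ν) x
      ≤ 2 * ∫ t in Iic T, tailDist ν (x - t) ∂ν
        + C * C * ((μ.prod μ) (jointTailSet T x)).toReal := by
  have hle := prod_jointTailSet_le ENNReal.ofReal_ne_top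
    (fun u hu => measure_Ioi_le_of_tailDist_le hC (h u hu)) x
  rw [tailDist_convDist_self ν hx]
  gcongr
  calc ((ν.prod ν) (jointTailSet T x)).toReal
      ≤ (ENNReal.ofReal C * ENNReal.ofReal C * (μ.prod μ) (jointTailSet T x)).toReal :=
        ENNReal.toReal_mono (by finiteness) hle
    _ = C * C * ((μ.prod μ) (jointTailSet T x)).toReal := by
        rw [ENNReal.toReal_mul, ENNReal.toReal_mul, ENNReal.toReal_ofReal hC]

theorem IsConvEquiv.of_isTheta {α : ℝ} (hα : 0 ≤ α) {μ ν : Measure ℝ} [IsFiniteMeasure μ]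
    [IsFiniteMeasure ν] (hμ : IsConvEquiv α μ) (hν : IsLongTailed α (tailDist ν))
    (hνμ : tailDist ν =Θ[atTop] tailDist μ) : IsConvEquiv α ν := by
  obtain ⟨C, hC, hνC⟩ := exists_pos_eventually_le_of_isBigO hνμ.isBigO (tailDist_nonneg μ)
  obtain ⟨K, hK, hμK⟩ := exists_pos_eventually_le_of_isBigO hνμ.symm.isBigO (tailDist_nonneg ν)
  obtain ⟨T₀, hT₀⟩ := hνC.exists_forall_of_atTop
  have hνpos : ∀ x, 0 < tailDist ν x := tailDist_pos_of_eventually_pos ν <|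
    hμK.mono fun x hx => pos_of_mul_pos_right ((hμ.1 x).trans_le hx) hK.le
  have hνint := integrable_exp_of_isBigO_tailDist hα hμ.2.2.1 hνμ.isBigO
  refine ⟨hνpos, hν, hνint, tendsto_of_forall_eventually_bounds (l := atTop)
    (lo := fun T x => 2 * ((∫ t in Iic T, tailDist ν (x - t) ∂ν) / tailDist ν x))
    (hi := fun T x => 2 * ((∫ t in Iic T, tailDist ν (x - t) ∂ν) / tailDist ν x)
      + C * C * K * (((μ.prod μ) (jointTailSet T x)).toReal / tailDist μ x))
    (.of_forall fun T => ?_) ?_ (fun T => (hν.tendsto_setIntegral_Iic_div T).const_mul 2)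
    (fun T => ((hν.tendsto_setIntegral_Iic_div T).const_mul 2).add
      ((hμ.tendsto_jointTailSet_div T).const_mul _))
    ((tendsto_setIntegral_Iic_atTop hνint).const_mul 2) ?_⟩
  · filter_upwards [eventually_gt_atTop (2 * T)] with x hx
    rw [tailDist_convDist_self ν hx, ← mul_div_assoc]
    exact div_le_div_of_nonneg_right (le_add_of_nonneg_right ENNReal.toReal_nonneg)
      (tailDist_nonneg ν x)
  · filter_upwards [eventually_ge_atTop T₀] with T hT
    filter_upwards [eventually_gt_atTop (2 * T), hμK] with x hx hx'
    have hR : ((μ.prod μ) (jointTailSet T x)).toReal / tailDist ν x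
        ≤ K * (((μ.prod μ) (jointTailSet T x)).toReal / tailDist μ x) := by
      rw [← mul_div_assoc, ← mul_div_mul_left _ (tailDist ν x) hK.ne']
      exact div_le_div_of_nonneg_left (by positivity) (hμ.1 x) hx'
    calc tailDist (convDist ν ν) x / tailDist ν x
        ≤ (2 * ∫ t in Iic T, tailDist ν (x - t) ∂ν
            + C * C * ((μ.prod μ) (jointTailSet T x)).toReal) / tailDist ν x :=
          div_le_div_of_nonneg_right
            (tailDist_convDist_self_le hC.le (fun u hu => hT₀ u (hT.trans hu)) hx)
            (hνpos x).le
      _ ≤ _ := by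
          rw [add_div, mul_div_assoc, mul_div_assoc, mul_assoc (C * C) K]
          gcongr
  · convert ((tendsto_setIntegral_Iic_atTop hνint).const_mul 2).add
      (((tendsto_setIntegral_Iic_atTop hμ.2.2.1).const_mul 2).const_sub (2 * mgfVal μ α)
        |>.const_mul (C * C * K)) using 2
    simp [mgfVal]

theorem IsConvEquiv.of_eventuallyEq_add {α : ℝ} (hα : 0 ≤ α) {μ ν : Measure ℝ}
    [IsFiniteMeasure μ] [IsFiniteMeasure ν] (hμ : IsConvEquiv α μ) {w : ℝ → ℝ}
    (hw : IsLongTailed α w) (hw0 : ∀ᶠ x in atTop, 0 < w x) (hwμ : w =O[atTop] tailDist μ)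
    {A B : ℝ} (hA : 0 < A) (hB : 0 < B)
    (hν : tailDist ν =ᶠ[atTop] fun x => A * tailDist μ x + B * w x) : IsConvEquiv α ν := by
  refine hμ.of_isTheta hα ((hμ.2.1.add hw (.of_forall hμ.1) hw0 hA hB).congr hν.symm) ⟨?_, ?_⟩
  · exact (((isBigO_refl _ _).const_mul_left A).add (hwμ.const_mul_left B)).congr'
      hν.symm EventuallyEq.rfl
  · refine IsBigO.of_bound A⁻¹ ?_
    filter_upwards [hν, hw0] with x hx hwx
    rw [Real.norm_of_nonneg (tailDist_nonneg μ x), Real.norm_of_nonneg (tailDist_nonneg ν x), hx,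
      inv_mul_eq_div, le_div_iff₀ hA]
    nlinarith

theorem posMod_apply_Ioi (μ : Measure ℝ) {u : ℝ} (hu : 0 ≤ u) : posMod μ (Ioi u) = μ (Ioi u) := by
  rw [posMod, Measure.map_apply (by fun_prop) measurableSet_Ioi]
  congr 1 with x
  simp only [mem_preimage, mem_Ioi, lt_max_iff, or_iff_left_iff_imp]
  exact fun h => absurd h hu.not_gt

instance isFiniteMeasure_posMod (μ : Measure ℝ) [IsFiniteMeasure μ] :
    IsFiniteMeasure (posMod μ) :=
  Measure.isFiniteMeasure_map μ _

theorem tailDist_posMod_map_log (U : Measure ℝ) (c : ENNReal) {u : ℝ} (hu : 0 ≤ u) :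
    tailDist (posMod ((c • U.restrict (Ioi 0)).map Real.log)) u
      = c.toReal * tailDist U (Real.exp u) := by
  rw [tailDist, posMod_apply_Ioi _ hu, Measure.map_apply Real.measurable_log measurableSet_Ioi,
    Measure.smul_apply, Measure.restrict_apply (Real.measurable_log measurableSet_Ioi),
    smul_eq_mul, ENNReal.toReal_mul]
  congr 3 with x
  simp only [mem_inter_iff, mem_preimage, mem_Ioi]
  exact ⟨fun ⟨h, hx⟩ => (Real.lt_log_iff_exp_lt hx).1 h,
    fun h => ⟨Real.lt_log_iff_exp_lt ((Real.exp_pos u).trans h) |>.2 h, (Real.exp_pos u).trans h⟩⟩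

theorem tailDist_exp_eq_mul_tailDist_posMod_map_log (U : Measure ℝ) [IsFiniteMeasure U]
    (hU : U (Ioi 0) ≠ 0) {u : ℝ} (hu : 0 ≤ u) :
    tailDist U (Real.exp u) = (U (Ioi 0)).toReal
      * tailDist (posMod (((U (Ioi 0))⁻¹ • U.restrict (Ioi 0)).map Real.log)) u := by
  rw [tailDist_posMod_map_log _ _ hu, ← mul_assoc, ENNReal.toReal_inv,
    mul_inv_cancel₀ (ENNReal.toReal_pos hU (measure_ne_top U _)).ne', one_mul]

instance isFiniteMeasure_ofReal_smul (a : ℝ) (μ : Measure ℝ) [IsFiniteMeasure μ] :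
    IsFiniteMeasure (ENNReal.ofReal a • μ) :=
  μ.smul_finite ENNReal.ofReal_ne_top

theorem tailDist_ofReal_smul_add {μ ν : Measure ℝ} [IsFiniteMeasure μ] [IsFiniteMeasure ν]
    {a b : ℝ} (ha : 0 ≤ a) (hb : 0 ≤ b) (x : ℝ) :
    tailDist (ENNReal.ofReal a • μ + ENNReal.ofReal b • ν) x
      = a * tailDist μ x + b * tailDist ν x := by
  rw [tailDist, Measure.add_apply, Measure.smul_apply, Measure.smul_apply, smul_eq_mul, smul_eq_mul,
    ENNReal.toReal_add (by finiteness) (by finiteness), ENNReal.toReal_mul, ENNReal.toReal_mul,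
    ENNReal.toReal_ofReal ha, ENNReal.toReal_ofReal hb, tailDist, tailDist]

theorem stmt_17_general
    (F G : Measure ℝ) [IsProbabilityMeasure F] [IsProbabilityMeasure G]
    (α : ℝ) (hα : 0 ≤ α)
    (hF : MemSRV α F)
    (hG : MemRV α G)
    (hO : (fun x => tailDist G x) =O[atTop] (fun x => tailDist F x)) :
    AssumpA α F G := by
  intro p hp hp1
  set H := ENNReal.ofReal p • F + ENNReal.ofReal (1 - p) • G
  set cF := F (Ioi 0)
  set cH := H (Ioi 0)
  have hcH : cH ≠ 0 := by
    have hG0 : G (Ioi 0) ≠ 0 := fun h => (hG.1 0).ne' (by simp [tailDist, h])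
    simp [cH, H, hG0, hp1]
  have : IsFiniteMeasure (cF⁻¹ • F.restrict (Ioi 0)) := Measure.smul_finite _ (by simpa using hF.1)
  have : IsFiniteMeasure (cH⁻¹ • H.restrict (Ioi 0)) := Measure.smul_finite _ (by simpa using hcH)
  have hcF_pos := ENNReal.toReal_pos hF.1 (measure_ne_top F _)
  have hcH_inv := ENNReal.toReal_pos (ENNReal.inv_ne_zero.2 (measure_ne_top H _))
    (ENNReal.inv_ne_top.2 hcH)
  have hGV := (hO.comp_tendsto Real.tendsto_exp_atTop).trans <|
    (isBigO_const_mul_self cF.toReal _ _).congr' ((eventually_ge_atTop 0).mono fun u hu =>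
      (tailDist_exp_eq_mul_tailDist_posMod_map_log F hF.1 hu).symm) EventuallyEq.rfl
  refine ⟨hcH, IsConvEquiv.of_eventuallyEq_add (A := cH⁻¹.toReal * p * cF.toReal)
    (B := cH⁻¹.toReal * (1 - p)) hα hF.2 hG.isLongTailed_comp_exp (.of_forall fun u => hG.1 _)
    hGV (by positivity) (mul_pos hcH_inv (by linarith)) ?_⟩
  · filter_upwards [eventually_ge_atTop 0] with u hu
    rw [tailDist_posMod_map_log _ _ hu, tailDist_ofReal_smul_add hp.le (by linarith),
      tailDist_exp_eq_mul_tailDist_posMod_map_log F hF.1 hu]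
    ring

/-- Special case (b) of Assumption A: if `F ∈ R*_{-α}`, `G ∈ R_{-α}` and `Ḡ(x) = O(F̄(x))`,
then every convex combination `pF + (1-p)G`, `0 < p < 1`, is in `R*_{-α}`. -/
theorem stmt_17
    (F G : Measure ℝ) [IsProbabilityMeasure F] [IsProbabilityMeasure G]
    (hGpos : G (Set.Iic 0) = 0)
    (α : ℝ) (hα : 0 ≤ α)
    (hF : MemSRV α F)
    (hG : MemRV α G)
    (hO : (fun x => tailDist G x) =O[atTop] (fun x => tailDist F x)) :
    AssumpA α F G :=
  stmt_17_general F G α hα hF hG hO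
end

section
/- Let X, X_1, X_2, ... be i.i.d. real-valued random variables with common distribution F on ℝ, let Y, Y_1, Y_2, ... be i.i.d. positive random variables with common distribution G on (0,∞), and let the two sequences be mutually independent. Suppose every convex combination pF+(1-p)G, 0<p<1, belongs to the class R*_{-α} of strongly regularly varying distributions for some α > 0, and suppose μ_α = E[Y^α] < 1. Then M_n = max_{0≤k≤n} S_k (with S_0 = 0, S_k = Σ_{i=1}^k X_i Π_{j=1}^i Y_j) converges almost surely to a limit M_∞ satisfying E[M_∞^α] ≤ E[(Σ_{i=1}^∞ X_{i,+} Π_{j=1}^i Y_j)^α] < ∞. -/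
open MeasureTheory ProbabilityTheory Filter Asymptotics

/-!
Assumption A at `p = 1/2` says that the conditional law of `log ξ` given `ξ > 0`, for `ξ` with
law `(F + G)/2`, has a finite exponential moment of order `α`; since `x ^ α ≤ exp (α (log x)₊)`
on `(0, ∞)`, this gives `E[X₊^α] < ∞` and `E[Y^α] = μ_α < ∞`. By independence the terms of
`T = ∑ᵢ X_{i,+} Y₁ ⋯ Yᵢ` have `α`-th moments `E[X₊^α] μ_α^i`, a geometric sequence, so
`E[T^α] < ∞` by subadditivity of `t ↦ t ^ α` when `α ≤ 1` and by Minkowski's inequality when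
`α ≥ 1`. As the `Yⱼ` are positive, `S_k ≤ T` for every `k`; hence the nondecreasing sequence
`M_n` is bounded by `T`, converges to its supremum `M_∞`, and `0 ≤ M_∞ ≤ T`.
-/

open Finset
open scoped ENNReal Topology

section RPowMoments

variable {Ω : Type*} [MeasurableSpace Ω] {μ : Measure Ω} {α : ℝ}

lemma ENNReal.tsum_mul_pow_lt_top {A r : ℝ≥0∞} (hA : A ≠ ∞) (hr : r < 1) :
    ∑' i : ℕ, A * r ^ i < ∞ := by
  rw [ENNReal.tsum_mul_left]
  exact ENNReal.mul_lt_top hA.lt_top (tsum_geometric_lt_top.2 hr)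

lemma lintegral_sum_rpow_le_of_le_one {ι : Type*} {f : ι → Ω → ℝ≥0∞}
    (hf : ∀ i, Measurable (f i)) (hα : 0 < α) (hα1 : α ≤ 1) (s : Finset ι) :
    ∫⁻ ω, (∑ i ∈ s, f i ω) ^ α ∂μ ≤ ∑ i ∈ s, ∫⁻ ω, f i ω ^ α ∂μ := by
  rw [← lintegral_finsetSum _ fun i _ => (hf i).pow_const α]
  exact lintegral_mono fun ω => le_sum_of_subadditive (· ^ α)
    (ENNReal.zero_rpow_of_pos hα).le (fun a b => ENNReal.rpow_add_le_add_rpow a b hα.le hα1) s _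

lemma lintegral_sum_rpow_le_of_one_le {ι : Type*} {f : ι → Ω → ℝ≥0∞}
    (hf : ∀ i, Measurable (f i)) (hα : 1 ≤ α) (s : Finset ι) :
    (∫⁻ ω, (∑ i ∈ s, f i ω) ^ α ∂μ) ^ (1 / α) ≤ ∑ i ∈ s, (∫⁻ ω, f i ω ^ α ∂μ) ^ (1 / α) := by
  simpa only [eLpNorm', enorm_eq_self, Finset.sum_apply] using
    eLpNorm'_sum_le (μ := μ) (s := s) (fun i _ => (hf i).aestronglyMeasurable) hα

lemma lintegral_tsum_rpow_eq_iSup {f : ℕ → Ω → ℝ≥0∞} (hf : ∀ i, Measurable (f i)) (hα : 0 < α) :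
    ∫⁻ ω, (∑' i, f i ω) ^ α ∂μ = ⨆ n, ∫⁻ ω, (∑ i ∈ range n, f i ω) ^ α ∂μ := by
  have hpow : ∀ ω, (∑' i, f i ω) ^ α = ⨆ n, (∑ i ∈ range n, f i ω) ^ α := fun ω => by
    rw [ENNReal.tsum_eq_iSup_nat]
    exact (ENNReal.orderIsoRpow α hα).map_iSup _
  simp_rw [hpow]
  exact lintegral_iSup (fun n => (Finset.measurable_sum _ fun i _ => hf i).pow_const α)
    fun m n hmn ω => ENNReal.rpow_le_rpow (sum_le_sum_of_subset (range_subset_range.2 hmn)) hα.le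

lemma lintegral_tsum_rpow_lt_top {f : ℕ → Ω → ℝ≥0∞} (hf : ∀ i, Measurable (f i)) (hα : 0 < α)
    {A r : ℝ≥0∞} (hA : A ≠ ∞) (hr : r < 1) (hfA : ∀ i, ∫⁻ ω, f i ω ^ α ∂μ ≤ A * r ^ i) :
    ∫⁻ ω, (∑' i, f i ω) ^ α ∂μ < ∞ := by
  rw [lintegral_tsum_rpow_eq_iSup hf hα]
  rcases le_total α 1 with hα1 | hα1
  · refine (iSup_le fun n => ?_).trans_lt (ENNReal.tsum_mul_pow_lt_top hA hr)
    calc _ ≤ ∑ i ∈ range n, ∫⁻ ω, f i ω ^ α ∂μ := lintegral_sum_rpow_le_of_le_one hf hα hα1 _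
      _ ≤ ∑ i ∈ range n, A * r ^ i := sum_le_sum fun i _ => hfA i
      _ ≤ ∑' i, A * r ^ i := ENNReal.sum_le_tsum _
  · have hα' : 0 < 1 / α := by positivity
    have hroot : ∑' i : ℕ, A ^ (1 / α) * (r ^ (1 / α)) ^ i < ∞ :=
      ENNReal.tsum_mul_pow_lt_top (ENNReal.rpow_ne_top_of_nonneg hα'.le hA)
        (ENNReal.rpow_lt_one hr hα')
    refine (iSup_le fun n => ?_).trans_lt (ENNReal.rpow_lt_top_of_nonneg hα.le hroot.ne)
    rw [← ENNReal.rpow_inv_le_iff (by positivity), ← one_div]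
    calc _ ≤ ∑ i ∈ range n, (∫⁻ ω, f i ω ^ α ∂μ) ^ (1 / α) :=
          lintegral_sum_rpow_le_of_one_le hf hα1 _
      _ ≤ ∑ i ∈ range n, A ^ (1 / α) * (r ^ (1 / α)) ^ i := sum_le_sum fun i _ => by
          rw [← ENNReal.rpow_natCast, ← ENNReal.rpow_mul, mul_comm (1 / α), ENNReal.rpow_mul,
            ENNReal.rpow_natCast, ← ENNReal.mul_rpow_of_nonneg _ _ hα'.le]
          gcongr
          exact hfA i
      _ ≤ _ := ENNReal.sum_le_tsum _

lemma ae_summable_and_integrable_tsum_rpow {Z : ℕ → Ω → ℝ} (hZ : ∀ i, Measurable (Z i))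
    (hZ0 : ∀ᵐ ω ∂μ, ∀ i, 0 ≤ Z i ω) (hα : 0 < α)
    (hfin : ∫⁻ ω, (∑' i, ENNReal.ofReal (Z i ω)) ^ α ∂μ < ∞) :
    (∀ᵐ ω ∂μ, Summable fun i => Z i ω) ∧ Integrable (fun ω => (∑' i, Z i ω) ^ α) μ := by
  set T := fun ω => ∑' i, ENNReal.ofReal (Z i ω)
  have hTm : Measurable T := Measurable.tsum fun i => (hZ i).ennreal_ofReal
  have hZT : ∀ᵐ ω ∂μ, Summable (fun i => Z i ω) ∧ ∑' i, Z i ω = (T ω).toReal := by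
    filter_upwards [hZ0, ae_lt_top (hTm.pow_const α) hfin.ne] with ω h0 hT
    have hsum := ENNReal.summable_toReal ((ENNReal.rpow_lt_top_iff_of_pos hα).1 hT).ne
    simp only [ENNReal.toReal_ofReal (h0 _)] at hsum
    refine ⟨hsum, ?_⟩
    rw [ENNReal.tsum_toReal_eq fun _ => ENNReal.ofReal_ne_top]
    simp only [ENNReal.toReal_ofReal (h0 _)]
  refine ⟨hZT.mono fun ω h => h.1, ?_⟩
  refine (integrable_toReal_of_lintegral_ne_top (hTm.pow_const α).aemeasurable hfin.ne).congr ?_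
  filter_upwards [hZT] with ω h
  rw [h.2, ENNReal.toReal_rpow]

end RPowMoments

lemma ProbabilityTheory.iIndepFun.lintegral_comp_mul_prod_comp {Ω β ι κ : Type*}
    [MeasurableSpace Ω] [MeasurableSpace β] {P : Measure Ω} {X : ι → Ω → β} {Y : κ → Ω → β}
    (hind : iIndepFun (Sum.elim X Y) P)
    (hXm : ∀ i, Measurable (X i)) (hYm : ∀ j, Measurable (Y j)) {F G : Measure β}
    (hXF : ∀ i, P.map (X i) = F) (hYG : ∀ j, P.map (Y j) = G) {g h : β → ℝ≥0∞}
    (hg : Measurable g) (hh : Measurable h) (i : ι) (s : Finset κ) :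
    ∫⁻ ω, g (X i ω) * ∏ j ∈ s, h (Y j ω) ∂P = (∫⁻ x, g x ∂F) * (∫⁻ y, h y ∂G) ^ s.card := by
  classical
  set φ : ι ⊕ κ → Ω → ℝ≥0∞ := fun k => Sum.elim (fun _ => g) (fun _ => h) k ∘ Sum.elim X Y k
  have hφm : ∀ k, Measurable (φ k) := by
    rintro (i | j)
    exacts [hg.comp (hXm i), hh.comp (hYm j)]
  have hφ : iIndepFun φ P := hind.comp _ (by rintro (_ | _) <;> assumption)
  have key := lintegral_prod_eq_prod_lintegral_of_indepFun
    (insert (Sum.inl i) (s.map Function.Embedding.inr)) φ hφ hφm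
  simp only [prod_insert (show Sum.inl i ∉ s.map .inr by simp), prod_map, φ, Function.comp_apply,
    Function.Embedding.inr_apply, Sum.elim_inl, Sum.elim_inr] at key
  rw [key, ← hXF i, lintegral_map hg (hXm i), prod_congr rfl fun j _ => by
    rw [← lintegral_map hh (hYm j), hYG j], prod_const]

lemma ENNReal.ofReal_posPart_mul_prod_rpow {ι : Type*} {α x : ℝ} {y : ι → ℝ} {s : Finset ι}
    (hy : ∀ j ∈ s, 0 ≤ y j) (hα : 0 ≤ α) :
    ENNReal.ofReal (max x 0 * ∏ j ∈ s, y j) ^ α =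
      ENNReal.ofReal x ^ α * ∏ j ∈ s, ENNReal.ofReal (y j) ^ α := by
  rw [ENNReal.ofReal_mul (le_max_right _ _), ENNReal.ofReal_prod_of_nonneg hy,
    ENNReal.mul_rpow_of_nonneg _ _ hα, ENNReal.prod_rpow_of_nonneg hα, ENNReal.ofReal_max,
    ENNReal.ofReal_zero, max_eq_left zero_le]

lemma MemSRV.lintegral_rpow_lt_top {α : ℝ} (hα : 0 < α) {U : Measure ℝ} [IsFiniteMeasure U]
    (hU : MemSRV α U) : ∫⁻ x, ENNReal.ofReal x ^ α ∂U < ∞ := by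
  obtain ⟨-, -, -, hint, -⟩ := hU
  have hc : (U (Set.Ioi 0))⁻¹ ≠ 0 := ENNReal.inv_ne_zero.2 (measure_ne_top U _)
  have h := hint.lintegral_lt_top
  rw [posMod, lintegral_map (by fun_prop) (by fun_prop),
    lintegral_map (by fun_prop) Real.measurable_log, lintegral_smul_measure] at h
  rw [← setLIntegral_eq_of_support_subset (s := Set.Ioi 0)]
  · refine (setLIntegral_mono (by fun_prop) fun x (hx : 0 < x) => ?_).trans_lt
      (ENNReal.lt_top_of_mul_ne_top_right h.ne hc)
    -- `x ^ α = exp (α log x) ≤ exp (α (log x)₊)`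
    rw [ENNReal.ofReal_rpow_of_nonneg hx.le hα.le, Real.rpow_def_of_pos hx, mul_comm]
    gcongr
    exact le_max_left _ _
  · intro x hx
    by_contra hx0
    simp [ENNReal.ofReal_eq_zero.2 (not_lt.1 hx0), hα] at hx

lemma ofReal_integral_rpow_eq_lintegral {α : ℝ} (hα : 0 ≤ α) {G : Measure ℝ}
    (hG : ∀ᵐ y ∂G, 0 < y) (hfin : ∫⁻ y, ENNReal.ofReal y ^ α ∂G < ∞) :
    ENNReal.ofReal (∫ y, y ^ α ∂G) = ∫⁻ y, ENNReal.ofReal y ^ α ∂G := by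
  rw [integral_eq_lintegral_of_nonneg_ae (hG.mono fun y hy => Real.rpow_nonneg hy.le _)
      (by fun_prop),
    lintegral_congr_ae (hG.mono fun y hy => (ENNReal.ofReal_rpow_of_nonneg hy.le hα).symm),
    ENNReal.ofReal_toReal hfin.ne]

lemma AssumpA.lintegral_rpow_lt_top {α : ℝ} (hα : 0 < α) {F G : Measure ℝ} [IsFiniteMeasure F]
    [IsFiniteMeasure G] (h : AssumpA α F G) :
    ∫⁻ x, ENNReal.ofReal x ^ α ∂F < ∞ ∧ ∫⁻ x, ENNReal.ofReal x ^ α ∂G < ∞ := by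
  have := F.smul_finite (ENNReal.ofReal_ne_top (r := 1 / 2))
  have := G.smul_finite (ENNReal.ofReal_ne_top (r := 1 - 1 / 2))
  have hH := (h (1 / 2) (by norm_num) (by norm_num)).lintegral_rpow_lt_top hα
  rw [lintegral_add_measure, lintegral_smul_measure, lintegral_smul_measure,
    ENNReal.add_lt_top] at hH
  exact ⟨ENNReal.lt_top_of_mul_ne_top_right hH.1.ne (by norm_num),
    ENNReal.lt_top_of_mul_ne_top_right hH.2.ne (by norm_num)⟩

lemma sum_Icc_mul_le_tsum_posPart_mul {x c : ℕ → ℝ} (hc : ∀ i, 0 ≤ c i)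
    (hs : Summable fun i => max (x (i + 1)) 0 * c (i + 1)) (n : ℕ) :
    ∑ i ∈ Icc 1 n, x i * c i ≤ ∑' i, max (x (i + 1)) 0 * c (i + 1) := calc
  _ ≤ ∑ i ∈ Icc 1 n, max (x i) 0 * c i :=
      sum_le_sum fun i _ => mul_le_mul_of_nonneg_right (le_max_left _ _) (hc i)
  _ = ∑ i ∈ range n, max (x (i + 1)) 0 * c (i + 1) := by
      rw [← Ico_add_one_right_eq_Icc, sum_Ico_eq_sum_range]
      simp only [add_tsub_cancel_right, add_comm 1]
  _ ≤ _ := hs.sum_le_tsum _ fun i _ => mul_nonneg (le_max_right _ _) (hc _)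

lemma tendsto_ciSup_of_eq_sup'_range {s m : ℕ → ℝ} {b : ℝ}
    (hm : ∀ n, m n = (range (n + 1)).sup' nonempty_range_add_one s) (hb : ∀ k, s k ≤ b) :
    Tendsto m atTop (𝓝 (⨆ n, m n)) ∧ s 0 ≤ ⨆ n, m n ∧ ⨆ n, m n ≤ b := by
  have hmb : ∀ n, m n ≤ b := fun n => (hm n).trans_le (sup'_le _ _ fun k _ => hb k)
  have hbdd : BddAbove (Set.range m) := ⟨b, Set.forall_mem_range.2 hmb⟩
  have hmono : Monotone m := monotone_nat_of_le_succ fun n => by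
    rw [hm, hm]
    exact sup'_mono s (range_subset_range.2 (Nat.succ_le_succ n.le_succ)) _
  refine ⟨tendsto_atTop_ciSup hmono hbdd, le_ciSup_of_le hbdd 0 ?_, ciSup_le hmb⟩
  rw [hm]
  exact le_sup' s (mem_range.2 Nat.zero_lt_one)

lemma tendsto_ciSup_of_eq_sup'_range_partialSums {x y s m : ℕ → ℝ} (hy : ∀ j, 0 ≤ y j)
    (hsum : Summable fun i => max (x (i + 1)) 0 * ∏ j ∈ Icc 1 (i + 1), y j)
    (hs : ∀ k, s k = ∑ i ∈ Icc 1 k, x i * ∏ j ∈ Icc 1 i, y j)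
    (hm : ∀ n, m n = (range (n + 1)).sup' nonempty_range_add_one s) :
    Tendsto m atTop (𝓝 (⨆ n, m n)) ∧ 0 ≤ ⨆ n, m n ∧
      ⨆ n, m n ≤ ∑' i, max (x (i + 1)) 0 * ∏ j ∈ Icc 1 (i + 1), y j := by
  obtain ⟨hlim, hs0, hbound⟩ := tendsto_ciSup_of_eq_sup'_range hm fun k => (hs k).trans_le
    (sum_Icc_mul_le_tsum_posPart_mul (c := fun i => ∏ j ∈ Icc 1 i, y j)
      (fun i => prod_nonneg fun j _ => hy j) hsum k)
  rw [hs, Icc_eq_empty_of_lt zero_lt_one, sum_empty] at hs0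
  exact ⟨hlim, hs0, hbound⟩

theorem stmt_19_general
    {Ω : Type*} [MeasurableSpace Ω] (P : Measure Ω)
    (F G : Measure ℝ) [IsProbabilityMeasure F] [IsProbabilityMeasure G]
    (hGpos : G (Set.Iic 0) = 0)
    (X Y : ℕ → Ω → ℝ)
    (hXm : ∀ i, Measurable (X i)) (hYm : ∀ i, Measurable (Y i))
    (hXF : ∀ i, P.map (X i) = F) (hYG : ∀ i, P.map (Y i) = G)
    (hIndep : iIndepFun (Sum.elim X Y) P)
    (α : ℝ) (hα : 0 < α)
    (hAssump : AssumpA α F G)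
    (S M : ℕ → Ω → ℝ)
    (hS : ∀ n ω, S n ω = ∑ i ∈ Finset.Icc 1 n, X i ω * ∏ j ∈ Finset.Icc 1 i, Y j ω)
    (hM : ∀ n ω, M n ω = (Finset.range (n + 1)).sup' Finset.nonempty_range_add_one
        (fun k => S k ω))
    (μα : ℝ) (hμα : μα = ∫ y, y ^ α ∂G)
    (hμlt : μα < 1) :
    ∃ Minf : Ω → ℝ, Measurable Minf ∧
      (∀ᵐ ω ∂P, Tendsto (fun n => M n ω) atTop (nhds (Minf ω))) ∧
      Integrable
        (fun ω => (∑' i : ℕ, max (X (i + 1) ω) 0 * ∏ j ∈ Finset.Icc 1 (i + 1), Y j ω) ^ α)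
        P ∧
      (∫ ω, Minf ω ^ α ∂P) ≤
        ∫ ω, (∑' i : ℕ, max (X (i + 1) ω) 0 * ∏ j ∈ Finset.Icc 1 (i + 1), Y j ω) ^ α ∂P := by
  have hGae : ∀ᵐ y ∂G, 0 < y := by
    rw [ae_iff]
    simp only [not_lt]
    exact hGpos
  have hYpos : ∀ᵐ ω ∂P, ∀ j, 0 < Y j ω :=
    ae_all_iff.2 fun j => ae_of_ae_map (hYm j).aemeasurable (by rwa [hYG j])
  obtain ⟨hA, hB⟩ := hAssump.lintegral_rpow_lt_top hα
  set A := ∫⁻ x, ENNReal.ofReal x ^ α ∂F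
  set B := ∫⁻ y, ENNReal.ofReal y ^ α ∂G
  have hB1 : B < 1 := (ofReal_integral_rpow_eq_lintegral hα.le hGae hB).symm.trans_lt
    (by rw [← hμα]; exact ENNReal.ofReal_lt_one.2 hμlt)
  set Z : ℕ → Ω → ℝ := fun i ω => max (X (i + 1) ω) 0 * ∏ j ∈ Icc 1 (i + 1), Y j ω
  have hZm : ∀ i, Measurable (Z i) := fun i => by fun_prop
  have hmom : ∀ i, ∫⁻ ω, ENNReal.ofReal (Z i ω) ^ α ∂P = A * B * B ^ i := fun i => by
    rw [lintegral_congr_ae (hYpos.mono fun ω hY =>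
        ENNReal.ofReal_posPart_mul_prod_rpow (fun j _ => (hY j).le) hα.le),
      hIndep.lintegral_comp_mul_prod_comp hXm hYm hXF hYG
        (g := fun x => ENNReal.ofReal x ^ α) (h := fun y => ENNReal.ofReal y ^ α) (by fun_prop)
        (by fun_prop), Nat.card_Icc, add_tsub_cancel_right, pow_succ', mul_assoc]
  obtain ⟨hsum, hint⟩ := ae_summable_and_integrable_tsum_rpow hZm
    (hYpos.mono fun ω hY i => mul_nonneg (le_max_right _ _) (prod_nonneg fun j _ => (hY j).le))
    hα (lintegral_tsum_rpow_lt_top (fun i => (hZm i).ennreal_ofReal) hα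
      (ENNReal.mul_ne_top hA.ne hB.ne) hB1 fun i => (hmom i).le)
  have hpath : ∀ᵐ ω ∂P, Tendsto (M · ω) atTop (𝓝 (⨆ n, M n ω)) ∧
      0 ≤ ⨆ n, M n ω ∧ ⨆ n, M n ω ≤ ∑' i, Z i ω := by
    filter_upwards [hYpos, hsum] with ω hY hs
    exact tendsto_ciSup_of_eq_sup'_range_partialSums (x := (X · ω)) (y := (Y · ω))
      (fun j => (hY j).le) hs (hS · ω) (hM · ω)
  have hMm : ∀ n, Measurable (M n) := fun n => by
    rw [funext (hM n)]
    exact measurable_range_sup'' fun k _ => by rw [funext (hS k)]; fun_prop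
  refine ⟨fun ω => ⨆ n, M n ω, .iSup hMm, hpath.mono fun ω h => h.1, hint,
    integral_mono_of_nonneg ?_ hint ?_⟩
  · filter_upwards [hpath] with ω h using Real.rpow_nonneg h.2.1 α
  · filter_upwards [hpath] with ω h using Real.rpow_le_rpow h.2.1 h.2.2 hα.le

/-- Moment bound (2.5): if `μ_α < 1` (for `α > 0`) then `Mₙ` converges a.s. to `M∞` with
`E[M∞^α] ≤ E[(Σᵢ X_{i,+} Πⱼ Yⱼ)^α] < ∞`. -/
theorem stmt_19
    {Ω : Type*} [MeasurableSpace Ω] (P : Measure Ω) [IsProbabilityMeasure P]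
    (F G : Measure ℝ) [IsProbabilityMeasure F] [IsProbabilityMeasure G]
    (hGpos : G (Set.Iic 0) = 0)
    (X Y : ℕ → Ω → ℝ)
    (hXm : ∀ i, Measurable (X i)) (hYm : ∀ i, Measurable (Y i))
    (hXF : ∀ i, P.map (X i) = F) (hYG : ∀ i, P.map (Y i) = G)
    (hIndep : iIndepFun (Sum.elim X Y) P)
    (α : ℝ) (hα : 0 < α)
    (hAssump : AssumpA α F G)
    (S M : ℕ → Ω → ℝ)
    (hS : ∀ n ω, S n ω = ∑ i ∈ Finset.Icc 1 n, X i ω * ∏ j ∈ Finset.Icc 1 i, Y j ω)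
    (hM : ∀ n ω, M n ω = (Finset.range (n + 1)).sup' Finset.nonempty_range_add_one
        (fun k => S k ω))
    (μα : ℝ) (hμα : μα = ∫ y, y ^ α ∂G)
    (hμlt : μα < 1) :
    ∃ Minf : Ω → ℝ, Measurable Minf ∧
      (∀ᵐ ω ∂P, Tendsto (fun n => M n ω) atTop (nhds (Minf ω))) ∧
      Integrable
        (fun ω => (∑' i : ℕ, max (X (i + 1) ω) 0 * ∏ j ∈ Finset.Icc 1 (i + 1), Y j ω) ^ α)
        P ∧
      (∫ ω, Minf ω ^ α ∂P) ≤
        ∫ ω, (∑' i : ℕ, max (X (i + 1) ω) 0 * ∏ j ∈ Finset.Icc 1 (i + 1), Y j ω) ^ α ∂P :=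
  stmt_19_general P F G hGpos X Y hXm hYm hXF hYG hIndep α hα hAssump S M hS hM μα hμα hμlt
end
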